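/- Let a, b, c, d be four pairwise distinct complex numbers, and let f ∈ ℂ with f ≠ b and f ≠ d. Set x₁ = −((b−c)(a−d))/((b−d)(a−c)), x₃ = −((d−f)(b−a))/((d−a)(b−f)), and x₃′ = −((d−f)(b−c))/((d−c)(b−f)). Then x₃′ = (1+x₁⁻¹)⁻¹·x₃. -/

import Mathlib

/-!
`1 + x₁⁻¹` is again a cross-ratio of `a, b, c, d`, and replacing the right vertex `a` of the
edge `bd` by `c` multiplies its weight by exactly the inverse of that cross-ratio.
-/

/-- `X(p, p', l, r)`: the weight of the edge from `p` to `p'` with left vertex `l` and right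
vertex `r`. -/
def crossRatioWeight {K : Type*} [Field K] (p p' l r : K) : K :=
  -((p' - l) * (p - r)) / ((p' - r) * (p - l))

section

variable {K : Type*} [Field K]

theorem inv_one_add_inv_crossRatioWeight {a b c d : K} (had : a ≠ d) (hbc : b ≠ c) :
    (1 + (crossRatioWeight a b c d)⁻¹)⁻¹ = (b - c) * (d - a) / ((d - c) * (b - a)) := by
  have hbc' : b - c ≠ 0 := sub_ne_zero.mpr hbc
  have hda' : d - a ≠ 0 := sub_ne_zero.mpr had.symm
  have one_add_inv :
      1 + (crossRatioWeight a b c d)⁻¹ = (d - c) * (b - a) / ((b - c) * (d - a)) := by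
    unfold crossRatioWeight
    field_simp
    ring
  rw [one_add_inv, inv_div]

theorem crossRatioWeight_eq_mul {p p' l r r' : K} (hpr : p ≠ r) (hp'r : p' ≠ r) :
    crossRatioWeight p p' l r' =
      (p - r') * (p' - r) / ((p' - r') * (p - r)) * crossRatioWeight p p' l r := by
  have hpr' : p - r ≠ 0 := sub_ne_zero.mpr hpr
  have hp'r' : p' - r ≠ 0 := sub_ne_zero.mpr hp'r
  unfold crossRatioWeight
  field_simp

end

theorem diag_exchange_side_bd_general
    (a b c d f : ℂ)
    (hab : a ≠ b) (had : a ≠ d)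
    (hbc : b ≠ c) :
    -((d - f) * (b - c)) / ((d - c) * (b - f)) =
      (1 + (-((b - c) * (a - d)) / ((b - d) * (a - c)))⁻¹)⁻¹ *
        (-((d - f) * (b - a)) / ((d - a) * (b - f))) := by
  change crossRatioWeight b d f c =
    (1 + (crossRatioWeight a b c d)⁻¹)⁻¹ * crossRatioWeight b d f a
  rw [inv_one_add_inv_crossRatioWeight had hbc, crossRatioWeight_eq_mul hab.symm had.symm]

/-- Transformation of the weight of the side from `b` to `d` (outer vertex `f`)
under a diagonal exchange. -/
theorem diag_exchange_side_bd
    (a b c d f : ℂ)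
    (hab : a ≠ b) (hac : a ≠ c) (had : a ≠ d)
    (hbc : b ≠ c) (hbd : b ≠ d) (hcd : c ≠ d)
    (hfb : f ≠ b) (hfd : f ≠ d) :
    -((d - f) * (b - c)) / ((d - c) * (b - f)) =
      (1 + (-((b - c) * (a - d)) / ((b - d) * (a - c)))⁻¹)⁻¹ *
        (-((d - f) * (b - a)) / ((d - a) * (b - f))) :=
  diag_exchange_side_bd_general a b c d f hab had hbc
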